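/- arXiv:2405.06528 — 3 statements merged into one kernel-verified Lean document; each statement's English description precedes it below -/
import Mathlib

section
/- For probability measures P and Q on ℝ with finite second moments, means μ_P, μ_Q and variances σ_P², σ_Q², the Wasserstein-2 distance satisfies W₂(P, Q)² ≥ (μ_P − μ_Q)² + (σ_P − σ_Q)². -/
/-!
Take any coupling `π` of `P` and `Q` and let `X`, `Y` be the coordinates. Then
`E[(X - Y)²] = (E X - E Y)² + Var(X - Y)`, and by Cauchy–Schwarz for the covariance,
`Var(X - Y) = σ_X² - 2 cov(X, Y) + σ_Y² ≥ (σ_X - σ_Y)²`. The marginals of `π` fix the means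
and standard deviations of `X` and `Y`, so the bound holds for every coupling.
-/

open MeasureTheory ENNReal

/-- Squared Wasserstein-2 distance on `ℝ`: infimum over couplings of the
expected squared difference. -/
noncomputable def W2sq (P Q : MeasureTheory.Measure ℝ) : ℝ≥0∞ :=
  ⨅ (π : MeasureTheory.Measure (ℝ × ℝ)) (_ : π.map Prod.fst = P) (_ : π.map Prod.snd = Q),
    ∫⁻ p, ENNReal.ofReal ((p.1 - p.2) ^ 2) ∂π

open ProbabilityTheory

section Moments

variable {Ω : Type*} {mΩ : MeasurableSpace Ω} {μ : Measure Ω} {X Y : Ω → ℝ}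

lemma sq_covariance_le_variance_mul [IsFiniteMeasure μ] (hX : MemLp X 2 μ) (hY : MemLp Y 2 μ) :
    cov[X, Y; μ] ^ 2 ≤ Var[X; μ] * Var[Y; μ] := by
  have hquad : ∀ t : ℝ, 0 ≤ Var[X; μ] * (t * t) + (-2 * cov[X, Y; μ]) * t + Var[Y; μ] := by
    intro t
    have h := variance_nonneg (t • X - Y) μ
    rw [variance_sub (hX.const_smul t) hY, variance_smul, covariance_smul_left] at h
    linarith
  have := discrim_le_zero hquad
  rw [discrim] at this
  linarith

lemma sq_sub_sqrt_variance_le_variance_sub [IsFiniteMeasure μ] (hX : MemLp X 2 μ)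
    (hY : MemLp Y 2 μ) : (√Var[X; μ] - √Var[Y; μ]) ^ 2 ≤ Var[X - Y; μ] := by
  have hcov : cov[X, Y; μ] ≤ √Var[X; μ] * √Var[Y; μ] := by
    rw [← Real.sqrt_mul (variance_nonneg X μ)]
    exact Real.le_sqrt_of_sq_le (sq_covariance_le_variance_mul hX hY)
  rw [variance_sub hX hY, sub_sq, Real.sq_sqrt (variance_nonneg X μ),
    Real.sq_sqrt (variance_nonneg Y μ)]
  linarith

lemma sq_sub_integral_add_sq_sub_sqrt_variance_le [IsProbabilityMeasure μ] (hX : MemLp X 2 μ)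
    (hY : MemLp Y 2 μ) :
    (μ[X] - μ[Y]) ^ 2 + (√Var[X; μ] - √Var[Y; μ]) ^ 2 ≤ ∫ ω, (X ω - Y ω) ^ 2 ∂μ := by
  have hmean : μ[X - Y] = μ[X] - μ[Y] :=
    integral_sub (hX.integrable one_le_two) (hY.integrable one_le_two)
  calc (μ[X] - μ[Y]) ^ 2 + (√Var[X; μ] - √Var[Y; μ]) ^ 2
      ≤ μ[X - Y] ^ 2 + Var[X - Y; μ] := by
        rw [hmean]
        gcongr
        exact sq_sub_sqrt_variance_le_variance_sub hX hY
    _ = μ[(X - Y) ^ 2] := by rw [variance_eq_sub (hX.sub hY), add_sub_cancel]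

end Moments

lemma ofReal_le_lintegral_sq_sub_of_coupling {P Q : Measure ℝ} [IsProbabilityMeasure P]
    (hP : MemLp id 2 P) (hQ : MemLp id 2 Q) {π : Measure (ℝ × ℝ)}
    (hπP : π.map Prod.fst = P) (hπQ : π.map Prod.snd = Q) :
    ENNReal.ofReal ((P[id] - Q[id]) ^ 2 + (√Var[id; P] - √Var[id; Q]) ^ 2)
      ≤ ∫⁻ p, ENNReal.ofReal ((p.1 - p.2) ^ 2) ∂π := by
  subst hπP hπQ
  have : IsProbabilityMeasure π := Measure.isProbabilityMeasure_of_map Prod.fst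
  have hX : MemLp Prod.fst 2 π := hP.comp_of_map measurable_fst.aemeasurable
  have hY : MemLp Prod.snd 2 π := hQ.comp_of_map measurable_snd.aemeasurable
  have hsq : Integrable (fun p : ℝ × ℝ ↦ (p.1 - p.2) ^ 2) π := (hX.sub hY).integrable_sq
  rw [variance_id_map measurable_fst.aemeasurable, variance_id_map measurable_snd.aemeasurable,
    integral_map measurable_fst.aemeasurable aestronglyMeasurable_id,
    integral_map measurable_snd.aemeasurable aestronglyMeasurable_id,
    ← ofReal_integral_eq_lintegral_ofReal hsq (ae_of_all _ fun p ↦ sq_nonneg _)]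
  exact ENNReal.ofReal_le_ofReal (sq_sub_integral_add_sq_sub_sqrt_variance_le hX hY)

lemma ofReal_le_W2sq {P Q : Measure ℝ} [IsProbabilityMeasure P]
    (hP : MemLp id 2 P) (hQ : MemLp id 2 Q) :
    ENNReal.ofReal ((P[id] - Q[id]) ^ 2 + (√Var[id; P] - √Var[id; Q]) ^ 2) ≤ W2sq P Q :=
  le_iInf₂ fun _π hπP ↦ le_iInf fun hπQ ↦
    ofReal_le_lintegral_sq_sub_of_coupling hP hQ hπP hπQ

lemma eq_sqrt_variance_id {P : Measure ℝ} {m σ : ℝ} (hσ : 0 ≤ σ) (hm : m = ∫ x, x ∂P)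
    (hv : σ ^ 2 = ∫ x, (x - m) ^ 2 ∂P) : σ = √Var[id; P] := by
  rw [variance_eq_integral aemeasurable_id, ← Real.sqrt_sq hσ, hv, hm]
  rfl

theorem scalar_gelbrich_general (P Q : Measure ℝ) [IsProbabilityMeasure P]
    (hP2 : Integrable (fun x => x ^ 2) P) (hQ2 : Integrable (fun x => x ^ 2) Q)
    (μP μQ σP σQ : ℝ) (hσP : 0 ≤ σP) (hσQ : 0 ≤ σQ)
    (hμP : μP = ∫ x, x ∂P) (hμQ : μQ = ∫ x, x ∂Q)
    (hvP : σP ^ 2 = ∫ x, (x - μP) ^ 2 ∂P) (hvQ : σQ ^ 2 = ∫ x, (x - μQ) ^ 2 ∂Q) :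
    ENNReal.ofReal ((μP - μQ) ^ 2 + (σP - σQ) ^ 2) ≤ W2sq P Q := by
  have hP : MemLp id 2 P := (memLp_two_iff_integrable_sq aestronglyMeasurable_id).2 hP2
  have hQ : MemLp id 2 Q := (memLp_two_iff_integrable_sq aestronglyMeasurable_id).2 hQ2
  rw [eq_sqrt_variance_id hσP hμP hvP, eq_sqrt_variance_id hσQ hμQ hvQ, hμP, hμQ]
  exact ofReal_le_W2sq hP hQ

/-- Scalar Gelbrich bound: for probability measures `P`, `Q` on `ℝ` with finite
second moments, means `μP`, `μQ` and variances `σP²`, `σQ²`,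
`W₂(P, Q)² ≥ (μP − μQ)² + (σP − σQ)²`. -/
theorem scalar_gelbrich (P Q : Measure ℝ) [IsProbabilityMeasure P] [IsProbabilityMeasure Q]
    (hP2 : Integrable (fun x => x ^ 2) P) (hQ2 : Integrable (fun x => x ^ 2) Q)
    (μP μQ σP σQ : ℝ) (hσP : 0 ≤ σP) (hσQ : 0 ≤ σQ)
    (hμP : μP = ∫ x, x ∂P) (hμQ : μQ = ∫ x, x ∂Q)
    (hvP : σP ^ 2 = ∫ x, (x - μP) ^ 2 ∂P) (hvQ : σQ ^ 2 = ∫ x, (x - μQ) ^ 2 ∂Q) :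
    ENNReal.ofReal ((μP - μQ) ^ 2 + (σP - σQ) ^ 2) ≤ W2sq P Q :=
  scalar_gelbrich_general P Q hP2 hQ2 μP μQ σP σQ hσP hσQ hμP hμQ hvP hvQ
end

section
/- Let Σ_Z, Σ_Z' be positive definite d×d matrices with Σ_Z ⪯ Σ_Z', and Σ positive semidefinite, H ∈ ℝ^{d×d}. Then log(det(Σ_Z' + HΣHᵀ)/det(Σ_Z')) ≤ log(det(Σ_Z + HΣHᵀ)/det(Σ_Z)); i.e., the Gaussian capacity expression is monotone nonincreasing in the noise covariance (Löwner order). -/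
open Matrix

private lemma det_one_add_psd {d : ℕ} {P : Matrix (Fin d) (Fin d) ℝ} (hP : P.PosSemidef) :
    1 ≤ (1 + P).det := by
  have h := hP.1.spectral_theorem
  set U := (hP.1.eigenvectorUnitary : Matrix (Fin d) (Fin d) ℝ) with hUdef
  have hU : U * star U = 1 := Matrix.mem_unitaryGroup_iff.mp hP.1.eigenvectorUnitary.2
  have key : 1 + P = U * (1 + diagonal (RCLike.ofReal ∘ hP.1.eigenvalues)) * star U := by
    rw [Matrix.mul_add, Matrix.add_mul, Matrix.mul_one, hU]
    exact congrArg (1 + ·) h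
  rw [key, det_mul_right_comm, hU, one_mul]
  have : (1 : Matrix (Fin d) (Fin d) ℝ) + diagonal (RCLike.ofReal ∘ hP.1.eigenvalues)
      = diagonal (fun i => 1 + hP.1.eigenvalues i) := by
    rw [← Matrix.diagonal_one, Matrix.diagonal_add]
    rfl
  rw [this, det_diagonal]
  have : (1:ℝ) = ∏ _i : Fin d, (1:ℝ) := by simp
  rw [this]
  exact Finset.prod_le_prod (fun i _ => zero_le_one)
    (fun i _ => by linarith [hP.eigenvalues_nonneg i])

private lemma det_le_det_add {d : ℕ} {M N : Matrix (Fin d) (Fin d) ℝ} (hM : M.PosDef)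
    (hN : N.PosSemidef) : M.det ≤ (M + N).det := by
  open scoped MatrixOrder in set Q := CFC.sqrt N with hQdef
  open scoped MatrixOrder in have hQQ : Q * Q = N := CFC.sqrt_mul_sqrt_self N hN.nonneg
  open scoped MatrixOrder in have hQh : Qᴴ = Q := (CFC.sqrt_nonneg N).isSelfAdjoint
  have hMdet : IsUnit M.det := isUnit_iff_ne_zero.mpr hM.det_pos.ne'
  have hMinv : M * M⁻¹ = 1 := Matrix.mul_nonsing_inv _ hMdet
  have key : M + N = M * (1 + (M⁻¹ * Q) * Q) := by
    rw [Matrix.mul_add, Matrix.mul_one, ← Matrix.mul_assoc, ← Matrix.mul_assoc, hMinv, one_mul,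
      hQQ]
  have psd : (Q * (M⁻¹ * Q)).PosSemidef := by
    have h := hM.inv.posSemidef.mul_mul_conjTranspose_same Q
    rwa [hQh, Matrix.mul_assoc] at h
  have h1 := det_one_add_psd psd
  rw [key, det_mul, det_one_add_mul_comm]
  nlinarith [hM.det_pos]

private lemma inv_sub_inv_psd {d : ℕ} {A B : Matrix (Fin d) (Fin d) ℝ} (hA : A.PosDef)
    (hB : B.PosDef) (hle : (B - A).PosSemidef) : (A⁻¹ - B⁻¹).PosSemidef := by
  have hAdet : IsUnit A.det := isUnit_iff_ne_zero.mpr hA.det_pos.ne'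
  have hBdet : IsUnit B.det := isUnit_iff_ne_zero.mpr hB.det_pos.ne'
  have h1 : B⁻¹ * B = 1 := Matrix.nonsing_inv_mul _ hBdet
  have h2 : B * B⁻¹ = 1 := Matrix.mul_nonsing_inv _ hBdet
  have h3 : A * A⁻¹ = 1 := Matrix.mul_nonsing_inv _ hAdet
  have h4 : A⁻¹ * A = 1 := Matrix.nonsing_inv_mul _ hAdet
  have hBinvH : (B⁻¹)ᴴ = B⁻¹ := hB.inv.1
  have hDh : (B - A)ᴴ = B - A := hle.1
  have inner_psd : ((B - A) * A⁻¹ * (B - A) + (B - A)).PosSemidef := by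
    have h := hA.inv.posSemidef.mul_mul_conjTranspose_same (B - A)
    rw [hDh] at h
    exact h.add hle
  have key : A⁻¹ - B⁻¹ = B⁻¹ * ((B - A) * A⁻¹ * (B - A) + (B - A)) * (B⁻¹)ᴴ := by
    rw [hBinvH]
    have h3' : ∀ X : Matrix (Fin d) (Fin d) ℝ, A * (A⁻¹ * X) = X := fun X => by
      rw [← Matrix.mul_assoc, h3, one_mul]
    have expand : (B - A) * A⁻¹ * (B - A) + (B - A) = B * A⁻¹ * B - B := by
      simp only [Matrix.sub_mul, Matrix.mul_sub, Matrix.mul_assoc, h4, h3', Matrix.mul_one]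
      noncomm_ring
    rw [expand]
    simp only [Matrix.mul_sub, Matrix.sub_mul, ← Matrix.mul_assoc, h1]
    rw [Matrix.mul_assoc (1 * A⁻¹) B B⁻¹, h2]
    simp [Matrix.mul_assoc]
  rw [key]
  exact inner_psd.mul_mul_conjTranspose_same _

/-- Monotonicity of the Gaussian capacity expression in the noise covariance
(Löwner order): if `Σ_Z ⪯ Σ_Z'` (both positive definite) and `Σ ⪰ 0`, then
`log(det(Σ_Z' + HΣHᵀ)/det Σ_Z') ≤ log(det(Σ_Z + HΣHᵀ)/det Σ_Z)`. -/
theorem gaussian_capacity_antitone {d : ℕ} (SZ SZ' S : Matrix (Fin d) (Fin d) ℝ)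
    (H : Matrix (Fin d) (Fin d) ℝ) (hSZ : SZ.PosDef) (hSZ' : SZ'.PosDef)
    (hle : (SZ' - SZ).PosSemidef) (hS : S.PosSemidef) :
    Real.log ((SZ' + H * S * Hᵀ).det / SZ'.det)
      ≤ Real.log ((SZ + H * S * Hᵀ).det / SZ.det) := by
  have hA : (H * S * Hᵀ).PosSemidef := by
    have := hS.mul_mul_conjTranspose_same H
    simpa using this
  open scoped MatrixOrder in set R := CFC.sqrt (H * S * Hᵀ) with hRdef
  open scoped MatrixOrder in have hRR : R * R = H * S * Hᵀ := CFC.sqrt_mul_sqrt_self _ hA.nonneg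
  open scoped MatrixOrder in have hRh : Rᴴ = R := (CFC.sqrt_nonneg (H * S * Hᵀ)).isSelfAdjoint
  -- ratio identity
  have ratio : ∀ (M : Matrix (Fin d) (Fin d) ℝ), M.PosDef →
      (M + H * S * Hᵀ).det / M.det = (1 + R * M⁻¹ * R).det := by
    intro M hM
    have hMdet : IsUnit M.det := isUnit_iff_ne_zero.mpr hM.det_pos.ne'
    have hMinv : M * M⁻¹ = 1 := Matrix.mul_nonsing_inv _ hMdet
    have key : M + H * S * Hᵀ = M * (1 + (M⁻¹ * R) * R) := by
      rw [Matrix.mul_add, Matrix.mul_one, ← Matrix.mul_assoc, ← Matrix.mul_assoc, hMinv, one_mul,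
        hRR]
    rw [key, det_mul, mul_comm, mul_div_assoc, div_self hM.det_pos.ne', mul_one,
      det_one_add_mul_comm, ← Matrix.mul_assoc]
  have psd' : (R * SZ'⁻¹ * R).PosSemidef := by
    have h := hSZ'.inv.posSemidef.mul_mul_conjTranspose_same R
    rwa [hRh] at h
  have psdN : (R * (SZ⁻¹ - SZ'⁻¹) * R).PosSemidef := by
    have h := (inv_sub_inv_psd hSZ hSZ' hle).mul_mul_conjTranspose_same R
    rwa [hRh] at h
  have hM1 : (1 + R * SZ'⁻¹ * R).PosDef := Matrix.PosDef.add_posSemidef Matrix.PosDef.one psd'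
  have hsum : (1 + R * SZ'⁻¹ * R) + R * (SZ⁻¹ - SZ'⁻¹) * R = 1 + R * SZ⁻¹ * R := by
    simp only [Matrix.mul_sub, Matrix.sub_mul]
    abel
  have hdet : (1 + R * SZ'⁻¹ * R).det ≤ (1 + R * SZ⁻¹ * R).det := by
    have h := det_le_det_add hM1 psdN
    rwa [hsum] at h
  rw [ratio SZ' hSZ', ratio SZ hSZ]
  exact Real.log_le_log hM1.det_pos hdet
end

section
/- For σ₀ ≥ 0, r ≥ 0, D > 0, the supremum over all probability measures P on ℝ with mean 0, finite second moment, and W₂(P, N(0, σ₀²)) ≤ r of the variance of P equals (σ₀ + r)², attained by P = N(0, (σ₀ + r)²). -/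
open MeasureTheory ENNReal NNReal ProbabilityTheory

section Aux

open Real Filter Topology

-- basic real integrals
lemma int_exp : ∫ x : ℝ, rexp (-x^2/2) = √(2*π) := by
  have h := integral_gaussian (1/2)
  rw [show (π / (1/2)) = 2*π by ring] at h
  rw [← h]
  congr 1 with x
  ring_nf

lemma integrable_exp' : Integrable (fun x : ℝ => rexp (-x^2/2)) := by
  have h := integrable_exp_neg_mul_sq (b := 1/2) (by norm_num)
  convert h using 2 with x
  ring_nf

lemma integrable_sq_exp : Integrable (fun x : ℝ => x^2 * rexp (-x^2/2)) := by
  have h := integrable_rpow_mul_exp_neg_mul_sq (b := 1/2) (by norm_num) (s := 2) (by norm_num)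
  convert h using 2 with x
  rw [show ((2:ℝ) : ℝ) = ((2:ℕ) : ℝ) by norm_num, Real.rpow_natCast]
  ring_nf

lemma int_sq_exp : ∫ x : ℝ, x^2 * rexp (-x^2/2) = √(2*π) := by
  set g : ℝ → ℝ := fun x => -x * rexp (-x^2/2) with hg
  set g' : ℝ → ℝ := fun x => x^2 * rexp (-x^2/2) - rexp (-x^2/2) with hg'
  have hderiv : ∀ x : ℝ, HasDerivAt g (g' x) x := by
    intro x
    have he : HasDerivAt (fun x : ℝ => rexp (-x^2/2)) ((-x) * rexp (-x^2/2)) x := by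
      have h1 : HasDerivAt (fun x : ℝ => -x^2/2) (-x) x := by
        have := ((hasDerivAt_pow 2 x).neg).div_const 2
        convert this using 1
        any_goals rfl
        simp
        ring
      simpa [mul_comm] using h1.exp
    have := ((hasDerivAt_id x).neg.mul he)
    convert this using 1
    any_goals rfl
    simp [g', mul_comm]
    ring
  have htop : Tendsto g atTop (𝓝 0) := by
    have hlo := rpow_mul_exp_neg_mul_sq_isLittleO_exp_neg (b := 1/2) (by norm_num) (s := 1)
    have h0 : Tendsto (fun x : ℝ => x ^ (1:ℝ) * rexp (-(1/2) * x^2)) atTop (𝓝 0) :=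
      hlo.tendsto_zero_of_tendsto (by
        have h1 := (tendsto_id (α := ℝ) (x := atTop)).const_mul_atTop
            (show (0:ℝ) < 1/2 by norm_num)
        have hh := tendsto_neg_atTop_atBot.comp h1
        have hh' : Tendsto (fun x : ℝ => -(1/2) * x) atTop atBot := by
          refine hh.congr fun x => ?_
          simp [Function.comp]
        exact tendsto_exp_atBot.comp hh')
    have h1 : Tendsto (fun x : ℝ => x * rexp (-x^2/2)) atTop (𝓝 0) := by
      refine h0.congr' ?_
      filter_upwards [eventually_ge_atTop (0:ℝ)] with x hx
      rw [Real.rpow_one]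
      ring_nf
    simpa [g] using h1.neg
  have hbot : Tendsto g atBot (𝓝 0) := by
    have h1 : Tendsto (fun x : ℝ => x * rexp (-x^2/2)) atTop (𝓝 0) := by
      have hlo := rpow_mul_exp_neg_mul_sq_isLittleO_exp_neg (b := 1/2) (by norm_num) (s := 1)
      have h0 : Tendsto (fun x : ℝ => x ^ (1:ℝ) * rexp (-(1/2) * x^2)) atTop (𝓝 0) :=
        hlo.tendsto_zero_of_tendsto (by
        have h1 := (tendsto_id (α := ℝ) (x := atTop)).const_mul_atTop
            (show (0:ℝ) < 1/2 by norm_num)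
        have hh := tendsto_neg_atTop_atBot.comp h1
        have hh' : Tendsto (fun x : ℝ => -(1/2) * x) atTop atBot := by
          refine hh.congr fun x => ?_
          simp [Function.comp]
        exact tendsto_exp_atBot.comp hh')
      refine h0.congr' ?_
      filter_upwards [eventually_ge_atTop (0:ℝ)] with x hx
      rw [Real.rpow_one]
      ring_nf
    have hgneg : Tendsto (fun x : ℝ => g (-x)) atTop (𝓝 0) := by
      refine h1.congr fun x => ?_
      simp only [g, neg_neg, neg_sq]
    have h2 := hgneg.comp tendsto_neg_atBot_atTop
    refine h2.congr fun x => ?_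
    simp [Function.comp]
  have hint : Integrable g' := integrable_sq_exp.sub integrable_exp'
  have hIoi : ∫ x in Set.Ioi (0:ℝ), g' x = 0 - g 0 :=
    integral_Ioi_of_hasDerivAt_of_tendsto' (fun x _ => hderiv x) hint.integrableOn htop
  have hIic : ∫ x in Set.Iic (0:ℝ), g' x = g 0 - 0 :=
    integral_Iic_of_hasDerivAt_of_tendsto' (fun x _ => hderiv x) hint.integrableOn hbot
  have htot : ∫ x : ℝ, g' x = 0 := by
    rw [← intervalIntegral.integral_Iic_add_Ioi (b := (0:ℝ)) hint.integrableOn hint.integrableOn, hIoi, hIic]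
    ring
  have := integral_sub integrable_sq_exp integrable_exp'
  rw [show (fun x : ℝ => x^2 * rexp (-x^2/2) - rexp (-x^2/2)) = g' from rfl] at this
  rw [htot] at this
  have h2 : ∫ x : ℝ, x^2 * rexp (-x^2/2) = ∫ x : ℝ, rexp (-x^2/2) := by linarith [this.symm]
  rw [h2, int_exp]

lemma int_id_exp : ∫ x : ℝ, x * rexp (-x^2/2) = 0 := by
  have h := integral_neg_eq_self (fun x : ℝ => x * rexp (-x^2/2)) (volume : Measure ℝ)
  simp only [neg_sq] at h
  have : ∫ x : ℝ, -x * rexp (-x^2/2) = ∫ x : ℝ, x * rexp (-x^2/2) := h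
  simp only [neg_mul] at this
  rw [integral_neg] at this
  linarith


lemma pdf01 : gaussianPDFReal 0 1 = fun x => (√(2*π))⁻¹ * rexp (-x^2/2) := by
  ext x
  simp [gaussianPDFReal]

lemma integral_gauss01 (g : ℝ → ℝ) :
    ∫ x, g x ∂(gaussianReal 0 1) = ∫ x, gaussianPDFReal 0 1 x * g x := by
  rw [gaussianReal_of_var_ne_zero 0 one_ne_zero]
  have h : gaussianPDF 0 1 = fun x => ((Real.toNNReal (gaussianPDFReal 0 1 x) : ℝ≥0) : ℝ≥0∞) :=
    rfl
  rw [h, integral_withDensity_eq_integral_smul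
    ((measurable_gaussianPDFReal 0 1).real_toNNReal) g]
  congr 1 with x
  simp [NNReal.smul_def, Real.coe_toNNReal _ (gaussianPDFReal_nonneg 0 1 x)]

lemma integrable_gauss01_iff (g : ℝ → ℝ) (hg : AEStronglyMeasurable g (gaussianReal 0 1)) :
    Integrable g (gaussianReal 0 1) ↔
      Integrable (fun x => g x * gaussianPDFReal 0 1 x) volume := by
  rw [gaussianReal_of_var_ne_zero 0 one_ne_zero] at hg ⊢
  rw [integrable_withDensity_iff (measurable_gaussianPDF 0 1)
    (ae_of_all _ fun x => ENNReal.ofReal_lt_top)]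
  constructor <;> intro h <;> refine h.congr (ae_of_all _ fun x => ?_) <;>
    simp [gaussianPDF, ENNReal.toReal_ofReal (gaussianPDFReal_nonneg 0 1 x)]

lemma integrable_sq01 : Integrable (fun x : ℝ => x^2) (gaussianReal 0 1) := by
  rw [integrable_gauss01_iff _ (by fun_prop)]
  have := (integrable_sq_exp).const_mul ((√(2*π))⁻¹)
  refine this.congr (ae_of_all _ fun x => ?_)
  rw [pdf01]
  ring

lemma int_sq01 : ∫ x, x^2 ∂(gaussianReal 0 1) = 1 := by
  rw [integral_gauss01, pdf01]
  have h2π : √(2*π) ≠ 0 := by positivity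
  simp_rw [mul_assoc]
  rw [integral_const_mul]
  have : ∫ x : ℝ, rexp (-x^2/2) * x^2 = √(2*π) := by
    rw [← int_sq_exp]; congr 1 with x; ring
  rw [this, inv_mul_cancel₀ h2π]

lemma int_id01 : ∫ x, x ∂(gaussianReal 0 1) = 0 := by
  rw [integral_gauss01, pdf01]
  simp_rw [mul_assoc]
  rw [integral_const_mul]
  have : ∫ x : ℝ, rexp (-x^2/2) * x = 0 := by
    rw [← int_id_exp]; congr 1 with x; ring
  rw [this, mul_zero]

lemma gauss_map (v : ℝ≥0) :
    (gaussianReal 0 1).map (fun x => √(v:ℝ) * x) = gaussianReal 0 v := by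
  have h := gaussianReal_map_const_mul (μ := 0) (v := 1) (√(v:ℝ))
  rw [show ((√(v:ℝ)) * ·) = fun x => √(v:ℝ) * x from rfl] at h
  rw [h]
  congr 1
  · simp
  · ext
    simp [Real.sq_sqrt v.2]

lemma integrable_sq_gauss (v : ℝ≥0) : Integrable (fun x : ℝ => x^2) (gaussianReal 0 v) := by
  rw [← gauss_map v, integrable_map_measure (by fun_prop) (by fun_prop)]
  have := integrable_sq01.const_mul ((v:ℝ))
  refine this.congr (ae_of_all _ fun x => ?_)
  simp [Function.comp, mul_pow, Real.sq_sqrt v.2]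

lemma int_sq_gauss (v : ℝ≥0) : ∫ x, x^2 ∂(gaussianReal 0 v) = v := by
  rw [← gauss_map v, integral_map (by fun_prop) (by fun_prop)]
  have : ∀ x : ℝ, (√(v:ℝ) * x)^2 = (v:ℝ) * x^2 := fun x => by
    simp [mul_pow, Real.sq_sqrt v.2]
  simp_rw [this]
  rw [integral_const_mul, int_sq01, mul_one]

lemma int_id_gauss (v : ℝ≥0) : ∫ x, x ∂(gaussianReal 0 v) = 0 := by
  rw [← gauss_map v]
  have h := integral_map (μ := gaussianReal 0 1) (φ := fun x => √(v:ℝ) * x)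
    (by fun_prop) (f := fun x : ℝ => x) measurable_id.aestronglyMeasurable
  rw [h, integral_const_mul, int_id01, mul_zero]


lemma enorm_sq_eq (x : ℝ) : (‖x‖₊ : ℝ≥0∞) ^ (2:ℝ) = ENNReal.ofReal (x^2) := by
  rw [show ((‖x‖₊ : ℝ≥0∞)) = ‖x‖ₑ from rfl, Real.enorm_eq_ofReal_abs, ENNReal.ofReal_rpow_of_nonneg (abs_nonneg x) (by norm_num)]
  congr 1
  rw [show ((2:ℝ) = ((2:ℕ):ℝ)) by norm_num, Real.rpow_natCast, sq_abs]

lemma coupling_bound {P : Measure ℝ} (hPint : Integrable (fun x => x^2) P)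
    (v : ℝ≥0) {pp : Measure (ℝ × ℝ)}
    (h1 : pp.map Prod.fst = P) (h2 : pp.map Prod.snd = gaussianReal 0 v)
    {B : ℝ} (hB : 0 ≤ B)
    (hc : ∫⁻ p, ENNReal.ofReal ((p.1 - p.2)^2) ∂pp ≤ ENNReal.ofReal (B^2)) :
    ∫ x, x^2 ∂P ≤ (√(v:ℝ) + B)^2 := by
  set f : ℝ × ℝ → ℝ≥0∞ := fun p => (‖p.1 - p.2‖₊ : ℝ≥0∞) with hf_def
  set g : ℝ × ℝ → ℝ≥0∞ := fun p => (‖p.2‖₊ : ℝ≥0∞) with hg_def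
  have hf : AEMeasurable f pp := ((measurable_fst.sub measurable_snd).enorm).aemeasurable
  have hg : AEMeasurable g pp := (measurable_snd.enorm).aemeasurable
  have hmink := ENNReal.lintegral_Lp_add_le hf hg (by norm_num : (1:ℝ) ≤ 2)
  have hpt : ∀ p : ℝ × ℝ, (‖p.1‖₊ : ℝ≥0∞) ^ (2:ℝ) ≤ ((f + g) p) ^ (2:ℝ) := by
    intro p
    refine ENNReal.rpow_le_rpow ?_ (by norm_num)
    have h : p.1 = (p.1 - p.2) + p.2 := by ring
    calc (‖p.1‖₊ : ℝ≥0∞) = (‖(p.1 - p.2) + p.2‖₊ : ℝ≥0∞) := by rw [← h]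
      _ ≤ (‖p.1 - p.2‖₊ : ℝ≥0∞) + (‖p.2‖₊ : ℝ≥0∞) := by
          exact_mod_cast nnnorm_add_le (p.1 - p.2) p.2
  have hL : (∫⁻ p, (‖p.1‖₊ : ℝ≥0∞) ^ (2:ℝ) ∂pp) ^ (1/2:ℝ)
      ≤ (∫⁻ p, f p ^ (2:ℝ) ∂pp) ^ (1/2:ℝ) + (∫⁻ p, g p ^ (2:ℝ) ∂pp) ^ (1/2:ℝ) :=
    le_trans (ENNReal.rpow_le_rpow (lintegral_mono hpt) (by norm_num)) hmink
  have hm : Measurable fun x : ℝ => (‖x‖₊ : ℝ≥0∞) ^ (2:ℝ) := by fun_prop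
  have hI1 : ∫⁻ p, (‖((p : ℝ × ℝ).1)‖₊ : ℝ≥0∞) ^ (2:ℝ) ∂pp = ENNReal.ofReal (∫ x, x^2 ∂P) := by
    have hmap := lintegral_map (μ := pp) hm measurable_fst
    rw [h1] at hmap
    rw [← hmap]
    simp_rw [enorm_sq_eq]
    rw [← ofReal_integral_eq_lintegral_ofReal hPint (ae_of_all _ fun x => sq_nonneg x)]
  have hI2 : ∫⁻ p, f p ^ (2:ℝ) ∂pp ≤ ENNReal.ofReal (B^2) := by
    refine le_trans (le_of_eq ?_) hc
    congr 1 with p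
    exact enorm_sq_eq _
  have hI3 : ∫⁻ p, g p ^ (2:ℝ) ∂pp = ENNReal.ofReal ((v:ℝ)) := by
    have hmap := lintegral_map (μ := pp) hm measurable_snd
    rw [h2] at hmap
    rw [← hmap]
    simp_rw [enorm_sq_eq]
    rw [← ofReal_integral_eq_lintegral_ofReal (integrable_sq_gauss v)
      (ae_of_all _ fun x => sq_nonneg x), int_sq_gauss]
  rw [hI1, hI3] at hL
  have e1 : (ENNReal.ofReal (B^2)) ^ (1/2:ℝ) = ENNReal.ofReal B := by
    rw [ENNReal.ofReal_rpow_of_nonneg (sq_nonneg B) (by norm_num : (0:ℝ) ≤ 1/2)]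
    congr 1
    rw [← Real.rpow_natCast B 2, ← Real.rpow_mul hB]
    norm_num
  have e2 : (ENNReal.ofReal ((v:ℝ))) ^ (1/2:ℝ) = ENNReal.ofReal (√(v:ℝ)) := by
    rw [ENNReal.ofReal_rpow_of_nonneg (NNReal.coe_nonneg v) (by norm_num : (0:ℝ) ≤ 1/2), Real.sqrt_eq_rpow]
  have hL2 : (ENNReal.ofReal (∫ x, x^2 ∂P)) ^ (1/2:ℝ)
      ≤ ENNReal.ofReal (B + √(v:ℝ)) := by
    refine le_trans (hL.trans (add_le_add_left (ENNReal.rpow_le_rpow hI2 (by norm_num)) _)) ?_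
    rw [e1, e2, ← ENNReal.ofReal_add hB (Real.sqrt_nonneg _)]
  have hL3 : ENNReal.ofReal (∫ x, x^2 ∂P) ≤ ENNReal.ofReal ((B + √(v:ℝ))^2) := by
    have := ENNReal.rpow_le_rpow hL2 (by norm_num : (0:ℝ) ≤ 2)
    rw [← ENNReal.rpow_mul] at this
    norm_num at this
    rwa [← ENNReal.ofReal_pow (by positivity)] at this
  rw [show (√(v:ℝ) + B)^2 = (B + √(v:ℝ))^2 by ring]
  exact (ENNReal.ofReal_le_ofReal_iff (by positivity)).mp hL3

end Aux

open Filter Topology in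
/-- The supremum over all zero-mean probability measures `P` on `ℝ` with finite
second moment and `W₂(P, N(0, σ₀²)) ≤ r` of the variance of `P` equals `(σ₀ + r)²`,
attained by `P = N(0, (σ₀ + r)²)`. -/
theorem sup_variance_w2_ball (σ₀ r : ℝ≥0) (D : ℝ) (hD : 0 < D) :
    IsGreatest
      {v : ℝ | ∃ P : Measure ℝ, IsProbabilityMeasure P ∧
          Integrable (fun x => x ^ 2) P ∧ (∫ x, x ∂P) = 0 ∧
          W2sq P (gaussianReal 0 (σ₀ ^ 2)) ≤ ENNReal.ofReal ((r : ℝ) ^ 2) ∧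
          v = ∫ x, x ^ 2 ∂P}
      (((σ₀ : ℝ) + (r : ℝ)) ^ 2) ∧
    (∫ x, x ^ 2 ∂(gaussianReal 0 ((σ₀ + r) ^ 2))) = ((σ₀ : ℝ) + (r : ℝ)) ^ 2 ∧
    W2sq (gaussianReal 0 ((σ₀ + r) ^ 2)) (gaussianReal 0 (σ₀ ^ 2))
      ≤ ENNReal.ofReal ((r : ℝ) ^ 2) := by
  -- the coupling for the witness
  set c1 : ℝ := (σ₀ : ℝ) + (r : ℝ) with hc1
  set pw : Measure (ℝ × ℝ) :=
    (gaussianReal 0 1).map (fun x => (c1 * x, (σ₀ : ℝ) * x)) with hpw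
  have hmeas : Measurable fun x : ℝ => (c1 * x, (σ₀ : ℝ) * x) := by fun_prop
  have hfst : pw.map Prod.fst = gaussianReal 0 ((σ₀ + r) ^ 2) := by
    rw [hpw, Measure.map_map measurable_fst hmeas]
    have : (Prod.fst ∘ fun x : ℝ => (c1 * x, (σ₀ : ℝ) * x)) = (c1 * ·) := rfl
    rw [this, gaussianReal_map_const_mul]
    congr 1
    · simp
    · ext
      push_cast
      simp [hc1]
  have hsnd : pw.map Prod.snd = gaussianReal 0 (σ₀ ^ 2) := by
    rw [hpw, Measure.map_map measurable_snd hmeas]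
    have : (Prod.snd ∘ fun x : ℝ => (c1 * x, (σ₀ : ℝ) * x)) = ((σ₀ : ℝ) * ·) := rfl
    rw [this, gaussianReal_map_const_mul]
    congr 1
    · simp
    · ext
      push_cast
      simp
  have hlint : ∫⁻ p, ENNReal.ofReal ((p.1 - p.2) ^ 2) ∂pw = ENNReal.ofReal ((r : ℝ) ^ 2) := by
    rw [hpw, lintegral_map (by fun_prop) hmeas]
    have hsq : ∀ x : ℝ, (c1 * x - (σ₀ : ℝ) * x) ^ 2 = (r : ℝ)^2 * x^2 := by
      intro x; rw [hc1]; ring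
    simp_rw [hsq]
    rw [← ofReal_integral_eq_lintegral_ofReal (integrable_sq01.const_mul _)
      (ae_of_all _ fun x => by positivity)]
    rw [integral_const_mul, int_sq01, mul_one]
  have hW : W2sq (gaussianReal 0 ((σ₀ + r) ^ 2)) (gaussianReal 0 (σ₀ ^ 2))
      ≤ ENNReal.ofReal ((r : ℝ) ^ 2) := by
    rw [W2sq]
    refine iInf_le_of_le pw (iInf_le_of_le hfst (iInf_le_of_le hsnd ?_))
    rw [hlint]
  have hmom : (∫ x, x ^ 2 ∂(gaussianReal 0 ((σ₀ + r) ^ 2))) = ((σ₀ : ℝ) + (r : ℝ)) ^ 2 := by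
    rw [int_sq_gauss]
    push_cast
    ring
  refine ⟨⟨⟨gaussianReal 0 ((σ₀ + r) ^ 2), inferInstance, integrable_sq_gauss _,
    int_id_gauss _, hW, hmom.symm⟩, ?_⟩, hmom, hW⟩
  -- upper bound
  rintro y ⟨P, hPprob, hPint, _hmean, hWP, rfl⟩
  have key : ∀ ε : ℝ, 0 < ε → ∫ x, x ^ 2 ∂P ≤ ((σ₀ : ℝ) + (r : ℝ) + ε) ^ 2 := by
    intro ε hε
    have hlt : W2sq P (gaussianReal 0 (σ₀ ^ 2)) < ENNReal.ofReal (((r : ℝ) + ε) ^ 2) := by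
      refine lt_of_le_of_lt hWP ?_
      rw [ENNReal.ofReal_lt_ofReal_iff (by positivity)]
      nlinarith [r.coe_nonneg]
    rw [W2sq] at hlt
    obtain ⟨pp, hpp⟩ := iInf_lt_iff.mp hlt
    obtain ⟨h1, hpp⟩ := iInf_lt_iff.mp hpp
    obtain ⟨h2, hpp⟩ := iInf_lt_iff.mp hpp
    have hb := coupling_bound hPint (σ₀ ^ 2) h1 h2
      (B := (r : ℝ) + ε) (by positivity) hpp.le
    have hs : Real.sqrt (((σ₀ ^ 2 : ℝ≥0) : ℝ)) = (σ₀ : ℝ) := by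
      push_cast
      exact Real.sqrt_sq σ₀.coe_nonneg
    rw [hs] at hb
    calc ∫ x, x ^ 2 ∂P ≤ ((σ₀ : ℝ) + ((r : ℝ) + ε)) ^ 2 := hb
      _ = ((σ₀ : ℝ) + (r : ℝ) + ε) ^ 2 := by ring
  have htend : Tendsto (fun ε : ℝ => ((σ₀ : ℝ) + (r : ℝ) + ε) ^ 2) (𝓝[>] (0:ℝ))
      (𝓝 (((σ₀ : ℝ) + (r : ℝ)) ^ 2)) := by
    have hcont : Continuous fun ε : ℝ => ((σ₀ : ℝ) + (r : ℝ) + ε) ^ 2 := by continuity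
    have h0 := hcont.tendsto 0
    rw [add_zero] at h0
    exact h0.mono_left nhdsWithin_le_nhds
  exact ge_of_tendsto htend (eventually_nhdsWithin_of_forall fun ε hε => key ε hε)
end
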